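/- In the symplectic setting, if a, b ∈ V satisfy B(a, b) = 0, then for every X ∈ gl(V)_B one has ⁅D_{a,b}, ⁅D_{a,b}, X⁆⁆ = 2·B(a, X b)·D_{a,b} − 2·B(X a, a)·D_b − 2·B(X b, b)·D_a. -/

import Mathlib

/-- The endomorphism `D_{a,b} : v ↦ B(v,b)·a + B(v,a)·b` of the symplectic setting. -/
def Dpair {k V : Type*} [Field k] [AddCommGroup V] [Module k V]
    (B : LinearMap.BilinForm k V) (a b : V) : Module.End k V :=
  (B.flip b).smulRight a + (B.flip a).smulRight b

/-- The endomorphism `D_a : v ↦ B(v,a)·a` of the symplectic setting. -/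
def Dsq {k V : Type*} [Field k] [AddCommGroup V] [Module k V]
    (B : LinearMap.BilinForm k V) (a : V) : Module.End k V :=
  (B.flip a).smulRight a

/-!
Expanding `⁅D_{a,b}, Y⁆ v = D_{a,b}(Y v) - Y(D_{a,b} v)` twice, with `Y = ⁅D_{a,b}, X⁆`, gives a
combination of `a`, `b`, `X a`, `X b`. The coefficients of `X a` and `X b` are multiples of
`B(a,a)`, `B(b,b)`, `B(a,b)`, `B(b,a)` and vanish; self-adjointness of `X` and skew-symmetry of `B` turn the
remaining coefficients into multiples of `B(a,Xb)`, `B(Xa,a)` and `B(Xb,b)`.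
-/

section

variable {k V : Type*} [Field k] [AddCommGroup V] [Module k V] (B : LinearMap.BilinForm k V)

@[simp]
theorem Dpair_apply (a b v : V) : Dpair B a b v = B v b • a + B v a • b := rfl

@[simp]
theorem Dsq_apply (a v : V) : Dsq B a v = B v a • a := rfl

theorem lie_Dpair_apply (a b : V) (Y : Module.End k V) (v : V) :
    ⁅Dpair B a b, Y⁆ v = B (Y v) b • a + B (Y v) a • b - B v b • Y a - B v a • Y b := by
  simp only [Ring.lie_def, LinearMap.sub_apply, Module.End.mul_apply, Dpair_apply, map_add,
    map_smul]
  abel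

end

theorem stmt9_general {k V : Type*} [Field k] [AddCommGroup V] [Module k V]
    (B : LinearMap.BilinForm k V) (halt : ∀ v : V, B v v = 0)
    (a b : V) (hab : B a b = 0) :
    ∀ X : Module.End k V, (∀ u v : V, B u (X v) = B v (X u)) →
      ⁅Dpair B a b, ⁅Dpair B a b, X⁆⁆ =
        (2 * B a (X b)) • Dpair B a b - (2 * B (X a) a) • Dsq B b
          - (2 * B (X b) b) • Dsq B a := by
  intro X hX
  have hskew : ∀ u w, B u w = -B w u := fun u w => (LinearMap.IsAlt.neg halt w u).symm
  have hba : B b a = 0 := by rw [hskew, hab, neg_zero]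
  have hXab : B (X a) b = -B a (X b) := by rw [hskew, hX]
  have hXba : B (X b) a = -B a (X b) := by rw [hskew]
  ext v
  simp only [lie_Dpair_apply, map_add, map_sub, map_smul, LinearMap.add_apply,
    LinearMap.sub_apply, LinearMap.smul_apply, Dpair_apply, Dsq_apply, smul_eq_mul, halt, hab,
    hba, hXab, hXba, zero_smul]
  match_scalars <;> ring

/-- In the symplectic setting, if `B(a,b) = 0` then for every `X ∈ gl(V)_B`:
`⁅D_{a,b}, ⁅D_{a,b}, X⁆⁆ = 2·B(a,Xb)·D_{a,b} − 2·B(Xa,a)·D_b − 2·B(Xb,b)·D_a`. -/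
theorem stmt9 {k V : Type*} [Field k] [AddCommGroup V] [Module k V]
    (hchar : (2 : k) ≠ 0)
    (B : LinearMap.BilinForm k V) (halt : ∀ v : V, B v v = 0)
    (a b : V) (hab : B a b = 0) :
    ∀ X : Module.End k V, (∀ u v : V, B u (X v) = B v (X u)) →
      ⁅Dpair B a b, ⁅Dpair B a b, X⁆⁆ =
        (2 * B a (X b)) • Dpair B a b - (2 * B (X a) a) • Dsq B b
          - (2 * B (X b) b) • Dsq B a :=
  stmt9_general B halt a b hab
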